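/- If (x̄(t), ȳ(t), z̄(t)) is a solution of x̄' = -ȳ + x̄^2, ȳ' = x̄ - z̄, z̄' = μ̄ + a x̄ + b z̄ whose components are all polynomials in t, then deg x̄ ≤ 1, deg z̄ ≤ 1, and deg ȳ ≤ 2. -/

import Mathlib

/-!
Eliminating `q = p² - p'` and `r = p - q'` leaves a single equation
`r' = μ + a p + b r` for `p`. If `n = deg p ≥ 2`, then `deg q = 2n` and `deg r = 2n - 1`, which
exceeds the degrees of `r'` and of `μ + a p`; hence `b = 0`, and then `2n - 2 = deg r' ≤ n`
forces `n = 2`. In that borderline case the leading terms balance, and one more derivative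
gives the contradiction.
-/

open Polynomial

theorem Polynomial.derivative_eq_of_hasDerivAt {𝕜 : Type*} [NontriviallyNormedField 𝕜]
    {f g : 𝕜[X]} (h : ∀ t, HasDerivAt (fun s => f.eval s) (g.eval t) t) : derivative f = g :=
  Polynomial.funext fun t => (f.hasDerivAt t).unique (h t)

structure IsPolynomialSolution {R : Type*} [CommRing R] (a b μ : R) (p q r : R[X]) : Prop where
  derivative_p : derivative p = -q + p ^ 2
  derivative_q : derivative q = p - r
  derivative_r : derivative r = C μ + C a * p + C b * r

namespace IsPolynomialSolution

theorem of_hasDerivAt {𝕜 : Type*} [NontriviallyNormedField 𝕜] {a b μ : 𝕜} {p q r : 𝕜[X]}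
    (hx : ∀ t, HasDerivAt (fun s => p.eval s) (-(q.eval t) + (p.eval t) ^ 2) t)
    (hy : ∀ t, HasDerivAt (fun s => q.eval s) (p.eval t - r.eval t) t)
    (hz : ∀ t, HasDerivAt (fun s => r.eval s) (μ + a * p.eval t + b * r.eval t) t) :
    IsPolynomialSolution a b μ p q r where
  derivative_p := derivative_eq_of_hasDerivAt fun t => by simpa using hx t
  derivative_q := derivative_eq_of_hasDerivAt fun t => by simpa using hy t
  derivative_r := derivative_eq_of_hasDerivAt fun t => by simpa using hz t

section CommRing

variable {R : Type*} [CommRing R] {a b μ : R} {p q r : R[X]}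

theorem q_eq (h : IsPolynomialSolution a b μ p q r) : q = p ^ 2 - derivative p := by
  rw [h.derivative_p]; ring

theorem r_eq (h : IsPolynomialSolution a b μ p q r) : r = p - derivative q := by
  rw [h.derivative_q]; ring

end CommRing

variable {R : Type*} [CommRing R] [IsDomain R] [CharZero R] {a b μ : R} {p q r : R[X]}

theorem natDegree_q (h : IsPolynomialSolution a b μ p q r) : q.natDegree = 2 * p.natDegree := by
  have hlt : (derivative p).natDegree < (p ^ 2).natDegree ∨ p.natDegree = 0 := by
    rw [natDegree_derivative, natDegree_pow]; omega
  rcases hlt with hlt | hp0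
  · rw [h.q_eq, natDegree_sub_eq_left_of_natDegree_lt hlt, natDegree_pow]
  · rw [h.q_eq, derivative_of_natDegree_zero hp0, sub_zero, natDegree_pow]

theorem natDegree_r_le (h : IsPolynomialSolution a b μ p q r) :
    r.natDegree ≤ 2 * p.natDegree - 1 := by
  rw [h.r_eq]
  refine (natDegree_sub_le _ _).trans (max_le ?_ ?_)
  · omega
  · rw [natDegree_derivative, h.natDegree_q]

theorem natDegree_r_of_two_le (h : IsPolynomialSolution a b μ p q r) (hn : 2 ≤ p.natDegree) :
    r.natDegree = 2 * p.natDegree - 1 := by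
  rw [h.r_eq, natDegree_sub_eq_right_of_natDegree_lt] <;> rw [natDegree_derivative, h.natDegree_q]
  omega

theorem b_eq_zero_of_two_le (h : IsPolynomialSolution a b μ p q r) (hn : 2 ≤ p.natDegree) :
    b = 0 := by
  by_contra hb
  have hr := h.natDegree_r_of_two_le hn
  have hbr : C b * r = derivative r - C μ - C a * p := by rw [h.derivative_r]; ring
  have hlt : (C b * r).natDegree < r.natDegree := by
    rw [hbr]
    refine (natDegree_sub_le _ _).trans_lt
      (max_lt ((natDegree_sub_le _ _).trans_lt (max_lt ?_ ?_)) ?_)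
    · rw [natDegree_derivative]; omega
    · rw [natDegree_C]; omega
    · exact (natDegree_C_mul_le _ _).trans_lt (by omega)
  rw [natDegree_C_mul hb] at hlt
  exact hlt.false

theorem natDegree_le_two (h : IsPolynomialSolution a b μ p q r) : p.natDegree ≤ 2 := by
  by_contra! hn
  have hr := h.natDegree_r_of_two_le hn.le
  have hr' : (derivative r).natDegree ≤ p.natDegree := by
    rw [h.derivative_r, h.b_eq_zero_of_two_le hn.le, map_zero, zero_mul, add_zero]
    exact (natDegree_add_le _ _).trans (max_le (by simp) (natDegree_C_mul_le a p))
  rw [natDegree_derivative] at hr'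
  omega

theorem natDegree_ne_two (h : IsPolynomialSolution a b μ p q r) : p.natDegree ≠ 2 := by
  intro hn
  set k := (derivative (derivative p)).coeff 0
  have hk : derivative (derivative p) = C k := eq_C_of_natDegree_eq_zero (by simp [hn])
  have hk0 : k ≠ 0 := by
    rintro hk0
    rw [hk0, map_zero, derivative_eq_zero, natDegree_derivative] at hk
    omega
  have hsq : derivative (derivative (derivative (p ^ 2))) = C (6 * k) * derivative p := by
    simp only [derivative_sq, derivative_mul, derivative_add, derivative_C, hk, zero_mul,
      zero_add]
    simp only [map_mul, map_ofNat]
    ring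
  have hr₁ : derivative (derivative r) = C a * derivative p := by
    rw [h.derivative_r, h.b_eq_zero_of_two_le hn.ge]
    simp
  have hr₂ : derivative (derivative r) = C k - C (6 * k) * derivative p := by
    rw [h.r_eq, h.q_eq]
    simp only [derivative_sub, hsq, hk, derivative_C, sub_zero]
  have hlin : C k = C (a + 6 * k) * derivative p := by
    rw [map_add]
    linear_combination hr₂.symm.trans hr₁
  have hcoeff : (a + 6 * k) * k = 0 := by
    have := congrArg derivative hlin
    rwa [derivative_C, derivative_mul, derivative_C, zero_mul, zero_add, hk, ← map_mul, eq_comm,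
      C_eq_zero] at this
  rw [(mul_eq_zero.mp hcoeff).resolve_right hk0, map_zero, zero_mul, C_eq_zero] at hlin
  exact hk0 hlin

theorem natDegree_p_le_one (h : IsPolynomialSolution a b μ p q r) : p.natDegree ≤ 1 := by
  have := h.natDegree_le_two
  have := h.natDegree_ne_two
  omega

end IsPolynomialSolution

/-- If (x̄, ȳ, z̄) is a solution of x' = -y + x², y' = x - z, z' = μ + ax + bz
whose components are polynomials in t, then deg x̄ ≤ 1, deg z̄ ≤ 1, deg ȳ ≤ 2. -/
theorem polynomial_solution_degrees (a b μ : ℝ) (p q r : Polynomial ℝ)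
    (hx : ∀ t, HasDerivAt (fun s => p.eval s) (-(q.eval t) + (p.eval t) ^ 2) t)
    (hy : ∀ t, HasDerivAt (fun s => q.eval s) (p.eval t - r.eval t) t)
    (hz : ∀ t, HasDerivAt (fun s => r.eval s) (μ + a * p.eval t + b * r.eval t) t) :
    p.natDegree ≤ 1 ∧ r.natDegree ≤ 1 ∧ q.natDegree ≤ 2 := by
  have h := IsPolynomialSolution.of_hasDerivAt hx hy hz
  have hp := h.natDegree_p_le_one
  have hr := h.natDegree_r_le
  have hq := h.natDegree_q
  exact ⟨hp, by omega, by omega⟩
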